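/- arXiv:2008.01939 — 5 statements merged into one kernel-verified Lean document; each statement's English description precedes it below -/
import Mathlib

section
/- (Proposition 2.1) Let H be a real Hilbert space, let σ > 0, and let (ε_n)_{n∈ℕ} be a family of vectors in H that are pairwise orthogonal with ‖ε_n‖² = σ² for every n. Let 0 < d < 1/2 and set ψ_j(d) = Γ(j+d)/(Γ(j+1)·Γ(d)). Then the series ∑_{j=0}^∞ ψ_j(d)·ε_j converges in H (the family j ↦ ψ_j(d)·ε_j is summable in the norm topology). -/
open Real
open scoped RealInnerProductSpace

/-! By Pythagoras, a series of pairwise orthogonal vectors converges iff the squared norms are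
summable, so it suffices that `∑ ψ_j(d)² < ∞`. Log-convexity of `Γ` gives
`Γ(j + d) ≤ Γ(j + 1) j^(d-1)`, hence `ψ_j(d) ≤ j^(d-1) / Γ(d)`, which is square-summable
since `2 (d - 1) < -1`. -/

theorem summable_iff_summable_norm_sq_of_pairwise_inner_eq_zero {𝕜 E ι : Type*} [RCLike 𝕜]
    [NormedAddCommGroup E] [InnerProductSpace 𝕜 E] [CompleteSpace E] {v : ι → E}
    (hv : Pairwise fun i j => inner 𝕜 (v i) (v j) = 0) :
    Summable v ↔ Summable fun i => ‖v i‖ ^ 2 := by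
  have hV : OrthogonalFamily 𝕜 (fun i => 𝕜 ∙ v i) fun i => (𝕜 ∙ v i).subtypeₗᵢ :=
    OrthogonalFamily.of_pairwise fun i j hij => Submodule.isOrtho_span.2 <| by
      rintro _ rfl _ rfl
      exact hv hij
  exact hV.summable_iff_norm_sq_summable fun i => ⟨v i, Submodule.mem_span_singleton_self _⟩

/-- Log-convexity of `Γ` between `x` and `x + 1`, evaluated at `x + d = (1 - d) x + d (x + 1)`. -/
theorem Real.Gamma_add_le_Gamma_add_one_mul_rpow {x d : ℝ} (hx : 0 < x) (hd0 : 0 < d)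
    (hd1 : d < 1) : Gamma (x + d) ≤ Gamma (x + 1) * x ^ (d - 1) := by
  have hΓ : Gamma x = Gamma (x + 1) * x⁻¹ := by
    rw [Gamma_add_one hx.ne', mul_comm, inv_mul_cancel_left₀ hx.ne']
  calc Gamma (x + d) = Gamma ((1 - d) * x + d * (x + 1)) := by ring_nf
    _ ≤ Gamma x ^ (1 - d) * Gamma (x + 1) ^ d :=
      Gamma_mul_add_mul_le_rpow_Gamma_mul_rpow_Gamma hx (by linarith) (by linarith) hd0
        (by ring)
    _ = Gamma (x + 1) * x ^ (d - 1) := by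
      have hΓ1 : 0 < Gamma (x + 1) := Gamma_pos_of_pos (by linarith)
      rw [hΓ, mul_rpow hΓ1.le (inv_nonneg.2 hx.le), inv_rpow hx.le, ← rpow_neg hx.le,
        mul_right_comm, ← rpow_add hΓ1]
      norm_num

/-- `ψ_j(d)`, the moving-average coefficients of `(1 - B)^(-d)`. -/
noncomputable def fracDiffCoeff (d : ℝ) (j : ℕ) : ℝ :=
  Gamma (j + d) / (Gamma (j + 1) * Gamma d)

theorem fracDiffCoeff_nonneg {d : ℝ} (hd0 : 0 < d) (j : ℕ) : 0 ≤ fracDiffCoeff d j := by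
  have hpos {x : ℝ} (hx : 0 < x) : 0 ≤ Gamma x := (Gamma_pos_of_pos hx).le
  exact div_nonneg (hpos (by positivity)) (mul_nonneg (hpos (by positivity)) (hpos hd0))

theorem fracDiffCoeff_le {d : ℝ} (hd0 : 0 < d) (hd1 : d < 1) {j : ℕ} (hj : 0 < j) :
    fracDiffCoeff d j ≤ (j : ℝ) ^ (d - 1) / Gamma d := by
  have hΓd : 0 < Gamma d := Gamma_pos_of_pos hd0
  have hΓ1 : 0 < Gamma (j + 1) := Gamma_pos_of_pos (by positivity)
  have hΓ := Gamma_add_le_Gamma_add_one_mul_rpow (Nat.cast_pos.2 hj) hd0 hd1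
  rw [fracDiffCoeff, div_le_div_iff₀ (mul_pos hΓ1 hΓd) hΓd]
  linarith [mul_le_mul_of_nonneg_right hΓ hΓd.le]

theorem summable_fracDiffCoeff_sq {d : ℝ} (hd0 : 0 < d) (hd : d < 1 / 2) :
    Summable fun j => fracDiffCoeff d j ^ 2 := by
  have hmaj : Summable fun j : ℕ => ((j : ℝ) ^ (d - 1) / Gamma d) ^ 2 := by
    simp_rw [div_pow, ← rpow_mul_natCast (Nat.cast_nonneg _)]
    exact (summable_nat_rpow.2 (by push_cast; linarith)).div_const _
  refine hmaj.of_norm_bounded_eventually_nat (Filter.eventually_atTop.2 ⟨1, fun j hj => ?_⟩)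
  rw [Real.norm_of_nonneg (sq_nonneg _)]
  exact pow_le_pow_left₀ (fracDiffCoeff_nonneg hd0 j) (fracDiffCoeff_le hd0 (by linarith) hj) 2

theorem ptvarfima_ma_summable_general
    {H : Type*} [NormedAddCommGroup H] [InnerProductSpace ℝ H] [CompleteSpace H]
    (σ : ℝ) (ε : ℕ → H)
    (horth : ∀ m n : ℕ, m ≠ n → ⟪ε m, ε n⟫ = 0)
    (hnorm : ∀ n : ℕ, ‖ε n‖ ^ 2 = σ ^ 2)
    (d : ℝ) (hd0 : 0 < d) (hd : d < 1/2) :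
    Summable (fun j : ℕ =>
      (Real.Gamma (j + d) / (Real.Gamma (j + 1) * Real.Gamma d)) • ε j) := by
  change Summable fun j => fracDiffCoeff d j • ε j
  have hv : Pairwise fun i j => ⟪fracDiffCoeff d i • ε i, fracDiffCoeff d j • ε j⟫ = 0 :=
    fun i j hij => by simp only [real_inner_smul_left, real_inner_smul_right, horth i j hij,
      mul_zero]
  rw [summable_iff_summable_norm_sq_of_pairwise_inner_eq_zero hv]
  simp_rw [norm_smul, mul_pow, hnorm, Real.norm_eq_abs, sq_abs]
  exact (summable_fracDiffCoeff_sq hd0 hd).mul_right _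

/-- Proposition 2.1: In a real Hilbert space, if `(ε_n)` are pairwise
orthogonal with `‖ε_n‖² = σ²` and `0 < d < 1/2`, then the series
`∑ ψ_j(d) • ε_j` converges in `H`, where `ψ_j(d) = Γ(j+d)/(Γ(j+1)·Γ(d))`. -/
theorem ptvarfima_ma_summable
    {H : Type*} [NormedAddCommGroup H] [InnerProductSpace ℝ H] [CompleteSpace H]
    (σ : ℝ) (hσ : 0 < σ) (ε : ℕ → H)
    (horth : ∀ m n : ℕ, m ≠ n → ⟪ε m, ε n⟫ = 0)
    (hnorm : ∀ n : ℕ, ‖ε n‖ ^ 2 = σ ^ 2)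
    (d : ℝ) (hd0 : 0 < d) (hd : d < 1/2) :
    Summable (fun j : ℕ =>
      (Real.Gamma (j + d) / (Real.Gamma (j + 1) * Real.Gamma d)) • ε j) :=
  ptvarfima_ma_summable_general σ ε horth hnorm d hd0 hd
end

section
/- (Gauss summation at z = 1, used in the derivation of the autocovariance) Let a, b, c be real numbers with a > 0, b > 0, c > 0 and c > a + b. Then the series ∑_{j=0}^∞ Γ(a+j)·Γ(b+j) / (Γ(c+j)·Γ(j+1)) converges and equals Γ(a)·Γ(b)·Γ(c-a-b) / (Γ(c-a)·Γ(c-b)). -/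
/-!
Write `Γ(b+j)/Γ(c+j)` as the Beta integral `∫₀¹ t^(b+j-1) (1-t)^(c-b-1) dt / Γ(c-b)`.
All terms are nonnegative, so the sum may be taken under the integral (Tonelli in `ℝ≥0∞`), and
the binomial series `∑ Γ(a+j)/j! tʲ = Γ(a) (1-t)^(-a)` turns the integrand into
`Γ(a) t^(b-1) (1-t)^(c-a-b-1) / Γ(c-b)`, whose integral is again a Beta integral.
-/

open Real MeasureTheory Set

open scoped Nat

theorem hasSum_of_tsum_ofReal_eq {ι : Type*} {f : ι → ℝ} {r : ℝ} (hf : ∀ i, 0 ≤ f i)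
    (hr : 0 ≤ r) (h : ∑' i, ENNReal.ofReal (f i) = ENNReal.ofReal r) : HasSum f r := by
  lift f to ι → NNReal using hf
  lift r to NNReal using hr
  simp only [ENNReal.ofReal_coe_nnreal] at h
  rw [NNReal.hasSum_coe, ← ENNReal.hasSum_coe, ← h]
  exact ENNReal.summable.hasSum

namespace Real

theorem Gamma_add_nat_eq_factorial_mul_multichoose {a : ℝ} (ha : 0 < a) (n : ℕ) :
    Gamma (a + n) = n ! * Ring.multichoose a n * Gamma a := by
  rw [← nsmul_eq_mul, Ring.factorial_nsmul_multichoose_eq_ascPochhammer,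
    Polynomial.ascPochhammer_smeval_eq_eval]
  induction n with
  | zero => simp
  | succ n ih =>
    rw [Nat.cast_succ, ← add_assoc, Gamma_add_one (by positivity), ih, ascPochhammer_succ_eval]
    ring

theorem hasSum_multichoose_mul_pow (a : ℝ) {t : ℝ} (ht : |t| < 1) :
    HasSum (fun n ↦ Ring.multichoose a n * t ^ n) ((1 - t) ^ (-a)) := by
  have h := (one_div_one_sub_rpow_hasFPowerSeriesOnBall_zero a).hasSum
    (y := t) (by simpa [enorm_eq_nnnorm, ← NNReal.coe_lt_coe] using ht)
  simpa [FormalMultilinearSeries.ofScalars_apply_eq, Ring.multichoose_eq, rpow_neg,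
    (by linarith [abs_lt.1 ht] : 0 ≤ 1 - t), mul_comm] using h

theorem hasSum_Gamma_add_div_factorial_mul_pow {a t : ℝ} (ha : 0 < a) (ht : |t| < 1) :
    HasSum (fun n : ℕ ↦ Gamma (a + n) / n ! * t ^ n) (Gamma a * (1 - t) ^ (-a)) := by
  have hterm (n : ℕ) :
      Gamma (a + n) / n ! * t ^ n = Gamma a * (Ring.multichoose a n * t ^ n) := by
    rw [Gamma_add_nat_eq_factorial_mul_multichoose ha]
    field_simp
  simpa only [hterm] using (hasSum_multichoose_mul_pow a ht).mul_left (Gamma a)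

theorem tsum_ofReal_Gamma_add_div_factorial_mul_pow {a t : ℝ} (ha : 0 < a) (ht0 : 0 ≤ t)
    (ht1 : t < 1) :
    ∑' n : ℕ, ENNReal.ofReal (Gamma (a + n) / n ! * t ^ n) =
      ENNReal.ofReal (Gamma a * (1 - t) ^ (-a)) := by
  have h := hasSum_Gamma_add_div_factorial_mul_pow ha (abs_lt.2 ⟨by linarith, ht1⟩)
  rw [← ENNReal.ofReal_tsum_of_nonneg (fun n ↦ by positivity) h.summable, h.tsum_eq]

theorem lintegral_rpow_mul_one_sub_rpow {p q : ℝ} (hp : 0 < p) (hq : 0 < q) :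
    ∫⁻ t in Ioo 0 1, ENNReal.ofReal (t ^ (p - 1) * (1 - t) ^ (q - 1)) =
      ENNReal.ofReal (Gamma p * Gamma q / Gamma (p + q)) := by
  have hB := ProbabilityTheory.beta_pos hp hq
  have h := ProbabilityTheory.lintegral_betaPDF_eq_one hp hq
  simp_rw [ProbabilityTheory.lintegral_betaPDF, mul_assoc,
    ENNReal.ofReal_mul (one_div_pos.2 hB).le] at h
  rwa [lintegral_const_mul' _ _ ENNReal.ofReal_ne_top, one_div, ENNReal.ofReal_inv_of_pos hB,
    ← ENNReal.div_eq_inv_mul, ENNReal.div_eq_one_iff (by simpa using hB) ENNReal.ofReal_ne_top]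
    at h

theorem ofReal_Gamma_div_Gamma_eq_lintegral {p q : ℝ} (hp : 0 < p) (hpq : p < q) :
    ENNReal.ofReal (Gamma p / Gamma q) =
      (∫⁻ t in Ioo 0 1, ENNReal.ofReal (t ^ (p - 1) * (1 - t) ^ (q - p - 1))) /
        ENNReal.ofReal (Gamma (q - p)) := by
  have hqp : 0 < Gamma (q - p) := Gamma_pos_of_pos (by linarith)
  rw [lintegral_rpow_mul_one_sub_rpow hp (by linarith), ← ENNReal.ofReal_div_of_pos hqp,
    add_sub_cancel]
  congr 1
  field_simp

theorem tsum_ofReal_Gamma_mul_Gamma_div_Gamma {a b c : ℝ} (ha : 0 < a) (hb : 0 < b)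
    (hcab : a + b < c) :
    ∑' n : ℕ, ENNReal.ofReal (Gamma (a + n) / n ! * (Gamma (b + n) / Gamma (c + n))) =
      ENNReal.ofReal (Gamma a * Gamma b * Gamma (c - a - b) / (Gamma (c - a) * Gamma (c - b))) := by
  have hcb : 0 < Gamma (c - b) := Gamma_pos_of_pos (by linarith)
  have hbeta (n : ℕ) :
      ENNReal.ofReal (Gamma (a + n) / n ! * (Gamma (b + n) / Gamma (c + n))) =
        (∫⁻ t in Ioo 0 1, ENNReal.ofReal (Gamma (a + n) / n ! * t ^ n) *
          ENNReal.ofReal (t ^ (b - 1) * (1 - t) ^ (c - b - 1))) /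
          ENNReal.ofReal (Gamma (c - b)) := by
    rw [ENNReal.ofReal_mul (by positivity), ofReal_Gamma_div_Gamma_eq_lintegral (by positivity)
      (by linarith), ← mul_div_assoc, ← lintegral_const_mul' _ _ ENNReal.ofReal_ne_top,
      add_sub_add_right_eq_sub]
    congr 1
    refine setLIntegral_congr_fun measurableSet_Ioo fun t ⟨ht0, _⟩ ↦ ?_
    rw [← ENNReal.ofReal_mul (by positivity), ← ENNReal.ofReal_mul (by positivity)]
    congr 1
    rw [add_sub_right_comm, rpow_add_natCast ht0.ne']
    ring
  calc ∑' n : ℕ, ENNReal.ofReal (Gamma (a + n) / n ! * (Gamma (b + n) / Gamma (c + n)))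
      = (∫⁻ t in Ioo 0 1, ∑' n : ℕ, ENNReal.ofReal (Gamma (a + n) / n ! * t ^ n) *
          ENNReal.ofReal (t ^ (b - 1) * (1 - t) ^ (c - b - 1))) /
        ENNReal.ofReal (Gamma (c - b)) := by
        rw [lintegral_tsum fun n ↦ by fun_prop, div_eq_mul_inv, ← ENNReal.tsum_mul_right]
        exact tsum_congr fun n ↦ by rw [hbeta, div_eq_mul_inv]
    _ = ENNReal.ofReal (Gamma a) * (∫⁻ t in Ioo 0 1,
          ENNReal.ofReal (t ^ (b - 1) * (1 - t) ^ (c - a - b - 1))) /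
        ENNReal.ofReal (Gamma (c - b)) := by
        rw [← lintegral_const_mul' _ _ ENNReal.ofReal_ne_top]
        congr 1
        refine setLIntegral_congr_fun measurableSet_Ioo fun t ⟨ht0, ht1⟩ ↦ ?_
        rw [ENNReal.tsum_mul_right, tsum_ofReal_Gamma_add_div_factorial_mul_pow ha ht0.le ht1,
          ← ENNReal.ofReal_mul (by positivity), ← ENNReal.ofReal_mul (by positivity)]
        congr 1
        rw [show c - a - b - 1 = -a + (c - b - 1) by ring, rpow_add (by linarith)]
        ring
    _ = _ := by
        rw [lintegral_rpow_mul_one_sub_rpow hb (by linarith),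
          ← ENNReal.ofReal_mul (by positivity), ← ENNReal.ofReal_div_of_pos hcb]
        congr 1
        rw [add_sub_cancel]
        ring

end Real

theorem gauss_summation_general (a b c : ℝ) (ha : 0 < a) (hb : 0 < b)
    (hcab : a + b < c) :
    HasSum
      (fun j : ℕ =>
        Real.Gamma (a + j) * Real.Gamma (b + j) /
          (Real.Gamma (c + j) * Real.Gamma (j + 1)))
      (Real.Gamma a * Real.Gamma b * Real.Gamma (c - a - b) /
        (Real.Gamma (c - a) * Real.Gamma (c - b))) := by
  have hterm (j : ℕ) : Gamma (a + j) * Gamma (b + j) / (Gamma (c + j) * Gamma (j + 1)) =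
      Gamma (a + j) / j ! * (Gamma (b + j) / Gamma (c + j)) := by
    rw [Gamma_nat_eq_factorial]
    ring
  simp only [hterm]
  refine hasSum_of_tsum_ofReal_eq (fun j ↦ ?_) ?_
    (tsum_ofReal_Gamma_mul_Gamma_div_Gamma ha hb hcab)
  · have : 0 < c + j := by linarith [Nat.cast_nonneg (α := ℝ) j]
    positivity
  · have : 0 < c - a - b := by linarith
    have : 0 < c - a := by linarith
    have : 0 < c - b := by linarith
    positivity

/-- Gauss summation at z = 1: For reals `a, b, c > 0` with `c > a + b`,
`∑_{j=0}^∞ Γ(a+j)Γ(b+j)/(Γ(c+j)Γ(j+1)) = Γ(a)Γ(b)Γ(c-a-b)/(Γ(c-a)Γ(c-b))`. -/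
theorem gauss_summation (a b c : ℝ) (ha : 0 < a) (hb : 0 < b) (hc : 0 < c)
    (hcab : a + b < c) :
    HasSum
      (fun j : ℕ =>
        Real.Gamma (a + j) * Real.Gamma (b + j) /
          (Real.Gamma (c + j) * Real.Gamma (j + 1)))
      (Real.Gamma a * Real.Gamma b * Real.Gamma (c - a - b) /
        (Real.Gamma (c - a) * Real.Gamma (c - b))) :=
  gauss_summation_general a b c ha hb hcab
end

section
/- (Closed form of the autocovariance series, general lag) Let d₁, d₂ be real numbers with 0 < d₁ < 1/2 and 0 < d₂ < 1/2, let h be a natural number, and set ψ_j(d) = Γ(j+d)/(Γ(j+1)·Γ(d)). Then the series ∑_{j=0}^∞ ψ_j(d₁)·ψ_{j+h}(d₂) converges and equals Γ(1-d₁-d₂)·Γ(d₂+h) / (Γ(d₂)·Γ(1-d₂)·Γ(1+h-d₁)). -/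
/-!
Up to the factor `Γ(h + d₂) / (h! Γ(d₂))`, the `j`-th term is the `j`-th coefficient of
`₂F₁(d₁, h + d₂; h + 1; 1)`, so the claim is Gauss's summation theorem
`₂F₁(a, b; c; 1) = Γ(c) Γ(c - a - b) / (Γ(c - a) Γ(c - b))` for `0 < a`, `0 < b`, `a + b < c`.

The series converges by Raabe's test, which also gives `k uₖ → 0` for its terms `uₖ`. With this,
a telescoping identity yields the contiguous relation
`F(c) = (c - a)(c - b) / (c (c - a - b)) · F(c + 1)`. Iterating it `n` times, `F(c + n) → 1`
(every term but the first is `O(1 / n)`), while the accumulated quotient of Pochhammer symbols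
tends to the Gamma quotient by Euler's limit formula `Γ(s) = lim nˢ n! / (s)ₙ₊₁`.
-/

open Real Filter Topology Finset Polynomial
open scoped Nat

theorem ascPochhammer_eval_eq_prod_range {R : Type*} [CommSemiring R] (x : R) (n : ℕ) :
    (ascPochhammer R n).eval x = ∏ j ∈ range n, (x + j) := by
  induction n with
  | zero => simp
  | succ n ih => rw [ascPochhammer_succ_eval, ih, prod_range_succ]

theorem ascPochhammer_eval_succ_left {R : Type*} [CommSemiring R] (x : R) (n : ℕ) :
    (ascPochhammer R (n + 1)).eval x = x * (ascPochhammer R n).eval (x + 1) := by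
  rw [ascPochhammer_succ_left, eval_mul, eval_X, eval_comp, eval_add, eval_X, eval_one]

theorem ascPochhammer_eval_nonneg {R : Type*} [CommSemiring R] [PartialOrder R] [IsOrderedRing R]
    {x : R} (hx : 0 ≤ x) (n : ℕ) : 0 ≤ (ascPochhammer R n).eval x := by
  rw [ascPochhammer_eval_eq_prod_range]
  exact prod_nonneg fun j _ => by positivity

theorem ascPochhammer_eval_le_eval {R : Type*} [CommSemiring R] [PartialOrder R] [IsOrderedRing R]
    {x y : R} (hx : 0 ≤ x) (hxy : x ≤ y) (n : ℕ) :
    (ascPochhammer R n).eval x ≤ (ascPochhammer R n).eval y := by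
  simp only [ascPochhammer_eval_eq_prod_range]
  exact prod_le_prod (fun j _ => by positivity) fun j _ => by gcongr

theorem Real.Gamma_nat_add {x : ℝ} (hx : ∀ k : ℕ, x ≠ -k) (n : ℕ) :
    Gamma (n + x) = (ascPochhammer ℝ n).eval x * Gamma x := by
  induction n with
  | zero => simp
  | succ n ih =>
    have hxn : (n : ℝ) + x ≠ 0 := fun h => hx n (by linarith)
    rw [Nat.cast_succ, add_right_comm, Gamma_add_one hxn, ih, ascPochhammer_succ_eval]
    ring

theorem Real.tendsto_ascPochhammer_ratio {p q r s : ℝ} (hpq : p + q = r + s)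
    (hp : Gamma p ≠ 0) (hq : Gamma q ≠ 0) :
    Tendsto (fun n => (ascPochhammer ℝ n).eval p * (ascPochhammer ℝ n).eval q /
        ((ascPochhammer ℝ n).eval r * (ascPochhammer ℝ n).eval s)) atTop
      (𝓝 (Gamma r * Gamma s / (Gamma p * Gamma q))) := by
  rw [← tendsto_add_atTop_iff_nat 1]
  refine (((GammaSeq_tendsto_Gamma r).mul (GammaSeq_tendsto_Gamma s)).div
    ((GammaSeq_tendsto_Gamma p).mul (GammaSeq_tendsto_Gamma q)) (mul_ne_zero hp hq)).congr' ?_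
  filter_upwards [eventually_ne_atTop 0] with n hn
  have hn' : (0 : ℝ) < n := by positivity
  have hpow : (n : ℝ) ^ r * (n : ℝ) ^ s = (n : ℝ) ^ p * (n : ℝ) ^ q := by
    rw [← rpow_add hn', ← rpow_add hn', hpq]
  have hN : (n : ℝ) ^ p * (n : ℝ) ^ q * (n ! : ℝ) ^ 2 ≠ 0 := by positivity
  simp only [Pi.div_apply, GammaSeq, ← ascPochhammer_eval_eq_prod_range]
  rw [div_mul_div_comm, div_mul_div_comm,
    show (n : ℝ) ^ r * n ! * ((n : ℝ) ^ s * n !) = (n : ℝ) ^ p * (n : ℝ) ^ q * (n ! : ℝ) ^ 2 by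
      rw [← hpow]; ring,
    show (n : ℝ) ^ p * n ! * ((n : ℝ) ^ q * n !) = (n : ℝ) ^ p * (n : ℝ) ^ q * (n ! : ℝ) ^ 2 by
      ring,
    div_div_div_cancel_left' _ _ hN]

theorem summable_and_tendsto_natCast_mul_of_raabe {f : ℕ → ℝ} (hf : ∀ k, 0 ≤ f k) {δ : ℝ}
    (hδ : 0 < δ) (h : ∀ᶠ k : ℕ in atTop, δ * f k ≤ k * f k - (k + 1) * f (k + 1)) :
    Summable f ∧ Tendsto (fun k : ℕ => k * f k) atTop (𝓝 0) := by
  obtain ⟨K, hK⟩ := eventually_atTop.1 h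
  set g : ℕ → ℝ := fun k => ((k + K : ℕ) : ℝ) * f (k + K) with hg
  have hstep (k : ℕ) : δ * f (k + K) ≤ g k - g (k + 1) := by
    have := hK (k + K) (by omega)
    simp only [hg, Nat.add_right_comm k 1 K]
    push_cast at this ⊢
    linarith
  have hg_nonneg (k : ℕ) : 0 ≤ g k := mul_nonneg (Nat.cast_nonneg _) (hf _)
  have hg_anti : Antitone g :=
    antitone_nat_of_succ_le fun k => by nlinarith [hstep k, hf (k + K)]
  have hsum_le (n : ℕ) : ∑ k ∈ range n, f (k + K) ≤ g 0 / δ := by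
    rw [le_div_iff₀ hδ, mul_comm, mul_sum]
    calc ∑ k ∈ range n, δ * f (k + K) ≤ ∑ k ∈ range n, (g k - g (k + 1)) :=
          sum_le_sum fun k _ => hstep k
      _ = g 0 - g n := sum_range_sub' g n
      _ ≤ g 0 := by linarith [hg_nonneg n]
  have hsumm : Summable f :=
    (summable_nat_add_iff K).1 (summable_of_sum_range_le (fun k => hf _) hsum_le)
  obtain ⟨L, hL⟩ : ∃ L, Tendsto g atTop (𝓝 L) :=
    ⟨_, tendsto_atTop_ciInf hg_anti ⟨0, by rintro _ ⟨k, rfl⟩; exact hg_nonneg k⟩⟩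
  -- a positive limit `L` would force `f k ≥ L / k`
  have hL0 : L = 0 := by
    refine le_antisymm (not_lt.1 fun hLpos => Real.not_summable_natCast_inv ?_)
      (ge_of_tendsto' hL hg_nonneg)
    refine (summable_nat_add_iff K).1 (((summable_nat_add_iff K).2 hsumm).mul_left L⁻¹
      |>.of_nonneg_of_le (fun k => by positivity) fun k => ?_)
    have hLg : L ≤ g k := hg_anti.le_of_tendsto hL k
    rcases (Nat.cast_nonneg (α := ℝ) (k + K)).eq_or_lt with h0 | hpos
    · simp only [← h0, inv_zero]
      exact mul_nonneg (inv_nonneg.2 hLpos.le) (hf _)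
    · rw [inv_mul_eq_div, le_div_iff₀ hLpos, inv_mul_le_iff₀ hpos]
      exact hLg
  exact ⟨hsumm, (tendsto_add_atTop_iff_nat K).1 (hL0 ▸ hL)⟩

section Hypergeometric

@[simp]
theorem ordinaryHypergeometricCoefficient_zero {𝕂 : Type*} [Field 𝕂] (a b c : 𝕂) :
    ordinaryHypergeometricCoefficient a b c 0 = 1 := by
  simp [ordinaryHypergeometricCoefficient]

variable {a b c : ℝ}

theorem ordinaryHypergeometricCoefficient_nonneg (ha : 0 ≤ a) (hb : 0 ≤ b) (hc : 0 ≤ c)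
    (k : ℕ) : 0 ≤ ordinaryHypergeometricCoefficient a b c k := by
  have := ascPochhammer_eval_nonneg ha k
  have := ascPochhammer_eval_nonneg hb k
  have := ascPochhammer_eval_nonneg hc k
  positivity

theorem succ_mul_ordinaryHypergeometricCoefficient_succ (a b c : ℝ) (k : ℕ) :
    (k + 1) * ordinaryHypergeometricCoefficient a b c (k + 1) =
      ordinaryHypergeometricCoefficient a b c k * ((a + k) * (b + k) / (c + k)) := by
  have hk : (k + 1 : ℝ) ≠ 0 := by positivity
  simp only [ordinaryHypergeometricCoefficient, ascPochhammer_succ_eval, Nat.factorial_succ,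
    Nat.cast_mul, Nat.cast_succ, mul_inv, div_eq_mul_inv]
  field_simp

theorem ordinaryHypergeometricCoefficient_add_one (a b : ℝ) (hc : 0 < c) (k : ℕ) :
    ordinaryHypergeometricCoefficient a b (c + 1) k =
      ordinaryHypergeometricCoefficient a b c k * (c / (c + k)) := by
  have hC := ascPochhammer_pos k c hc
  have hck : (ascPochhammer ℝ k).eval (c + 1) = (ascPochhammer ℝ k).eval c * (c + k) / c := by
    rw [← ascPochhammer_succ_eval, ascPochhammer_eval_succ_left]
    field_simp
  simp only [ordinaryHypergeometricCoefficient, hck]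
  field_simp

theorem ordinaryHypergeometricCoefficient_succ_le (ha : 0 ≤ a) (hb : 0 ≤ b) (hc : 0 < c)
    {c' : ℝ} (hcc' : c ≤ c') (k : ℕ) :
    ordinaryHypergeometricCoefficient a b c' (k + 1) ≤
      c / c' * ordinaryHypergeometricCoefficient a b c (k + 1) := by
  have hc' : 0 < c' := hc.trans_le hcc'
  have hP := ascPochhammer_pos k (c + 1) (by linarith)
  have hPP := ascPochhammer_eval_le_eval (by linarith) (by linarith : c + 1 ≤ c' + 1) k
  have hK : 0 ≤ ((k + 1)! : ℝ)⁻¹ * (ascPochhammer ℝ (k + 1)).eval a *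
      (ascPochhammer ℝ (k + 1)).eval b := by
    have := ascPochhammer_eval_nonneg ha (k + 1)
    have := ascPochhammer_eval_nonneg hb (k + 1)
    positivity
  simp only [ordinaryHypergeometricCoefficient, ascPochhammer_eval_succ_left c,
    ascPochhammer_eval_succ_left c']
  generalize ((k + 1)! : ℝ)⁻¹ * (ascPochhammer ℝ (k + 1)).eval a *
    (ascPochhammer ℝ (k + 1)).eval b = K at hK ⊢
  calc K * (c' * (ascPochhammer ℝ k).eval (c' + 1))⁻¹
      ≤ K * (c' * (ascPochhammer ℝ k).eval (c + 1))⁻¹ :=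
        mul_le_mul_of_nonneg_left
          (inv_anti₀ (mul_pos hc' hP) (mul_le_mul_of_nonneg_left hPP hc'.le)) hK
    _ = c / c' * (K * (c * (ascPochhammer ℝ k).eval (c + 1))⁻¹) := by
      field_simp

-- Summed over `k`, the right-hand side telescopes: this is Gauss's contiguous relation.
theorem ordinaryHypergeometricCoefficient_contiguous (a b : ℝ) (hc : 0 < c) (k : ℕ) :
    (c - a - b) * ordinaryHypergeometricCoefficient a b c k -
        (c - a) * (c - b) / c * ordinaryHypergeometricCoefficient a b (c + 1) k =
      k * ordinaryHypergeometricCoefficient a b c k -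
        (k + 1) * ordinaryHypergeometricCoefficient a b c (k + 1) := by
  rw [ordinaryHypergeometricCoefficient_add_one a b hc,
    succ_mul_ordinaryHypergeometricCoefficient_succ]
  have : c + k ≠ 0 := by positivity
  field_simp
  ring

theorem summable_and_tendsto_natCast_mul_ordinaryHypergeometricCoefficient (ha : 0 < a)
    (hb : 0 < b) (habc : a + b < c) :
    Summable (ordinaryHypergeometricCoefficient a b c) ∧
      Tendsto (fun k : ℕ => k * ordinaryHypergeometricCoefficient a b c k) atTop (𝓝 0) := by
  have hc : 0 < c := by linarith
  refine summable_and_tendsto_natCast_mul_of_raabe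
    (ordinaryHypergeometricCoefficient_nonneg ha.le hb.le hc.le)
    (by linarith : 0 < (c - a - b) / 2) ?_
  filter_upwards [(tendsto_natCast_atTop_atTop (R := ℝ)).eventually_ge_atTop
    ((2 * a * b + (c - a - b) * c) / (c - a - b))] with k hk
  rw [div_le_iff₀ (by linarith)] at hk
  have hck : 0 < c + k := by positivity
  have hratio : (c - a - b) / 2 ≤ k - (a + k) * (b + k) / (c + k) := by
    rw [show (k : ℝ) - (a + k) * (b + k) / (c + k) = ((c - a - b) * k - a * b) / (c + k) by
      field_simp; ring, le_div_iff₀ hck]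
    nlinarith
  rw [succ_mul_ordinaryHypergeometricCoefficient_succ]
  nlinarith [ordinaryHypergeometricCoefficient_nonneg ha.le hb.le hc.le k]

theorem tsum_ordinaryHypergeometricCoefficient_eq_mul_tsum_add_one (ha : 0 < a) (hb : 0 < b)
    (habc : a + b < c) :
    ∑' k, ordinaryHypergeometricCoefficient a b c k =
      (c - a) * (c - b) / (c * (c - a - b)) *
        ∑' k, ordinaryHypergeometricCoefficient a b (c + 1) k := by
  have hc : 0 < c := by linarith
  obtain ⟨hsumm, hlim⟩ :=
    summable_and_tendsto_natCast_mul_ordinaryHypergeometricCoefficient ha hb habc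
  have hsumm₁ := (summable_and_tendsto_natCast_mul_ordinaryHypergeometricCoefficient ha hb
    (by linarith : a + b < c + 1)).1
  have hpartial (n : ℕ) : ∑ k ∈ range n, ((k : ℝ) * ordinaryHypergeometricCoefficient a b c k -
      (k + 1) * ordinaryHypergeometricCoefficient a b c (k + 1)) =
        -(n * ordinaryHypergeometricCoefficient a b c n) := by
    have := sum_range_sub' (fun k : ℕ => (k : ℝ) * ordinaryHypergeometricCoefficient a b c k) n
    push_cast at this
    simpa using this
  have htel : HasSum (fun k => (c - a - b) * ordinaryHypergeometricCoefficient a b c k -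
      (c - a) * (c - b) / c * ordinaryHypergeometricCoefficient a b (c + 1) k) 0 := by
    refine ((hsumm.mul_left _).sub (hsumm₁.mul_left _)).hasSum_iff_tendsto_nat.2 ?_
    simp only [ordinaryHypergeometricCoefficient_contiguous a b hc, hpartial]
    simpa using hlim.neg
  have hrel := htel.tsum_eq
  rw [(hsumm.mul_left _).tsum_sub (hsumm₁.mul_left _), tsum_mul_left, tsum_mul_left] at hrel
  have : c - a - b ≠ 0 := by linarith
  field_simp at hrel ⊢
  linarith

theorem tsum_ordinaryHypergeometricCoefficient_eq_mul_tsum_add_nat (ha : 0 < a) (hb : 0 < b)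
    (habc : a + b < c) (n : ℕ) :
    ∑' k, ordinaryHypergeometricCoefficient a b c k =
      (ascPochhammer ℝ n).eval (c - a) * (ascPochhammer ℝ n).eval (c - b) /
          ((ascPochhammer ℝ n).eval c * (ascPochhammer ℝ n).eval (c - a - b)) *
        ∑' k, ordinaryHypergeometricCoefficient a b (c + n) k := by
  induction n with
  | zero => simp
  | succ n ih =>
    have hn := n.cast_nonneg (α := ℝ)
    rw [ih, tsum_ordinaryHypergeometricCoefficient_eq_mul_tsum_add_one ha hb (by linarith),
      Nat.cast_succ, ← add_assoc]
    have := ascPochhammer_pos n c (by linarith)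
    have := ascPochhammer_pos n (c - a - b) (by linarith)
    have : c + n ≠ 0 := by linarith
    have : c + n - a - b ≠ 0 := by linarith
    have : c - a - b + n ≠ 0 := by linarith
    simp only [ascPochhammer_succ_eval]
    generalize ∑' k, ordinaryHypergeometricCoefficient a b (c + n + 1) k = S
    field_simp
    ring

theorem tendsto_tsum_ordinaryHypergeometricCoefficient_add_nat (ha : 0 < a) (hb : 0 < b)
    (habc : a + b < c) :
    Tendsto (fun n : ℕ => ∑' k, ordinaryHypergeometricCoefficient a b (c + n) k) atTop (𝓝 1) := by
  have hc : 0 < c := by linarith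
  have hsumm (n : ℕ) : Summable (ordinaryHypergeometricCoefficient a b (c + n)) :=
    (summable_and_tendsto_natCast_mul_ordinaryHypergeometricCoefficient ha hb
      (by linarith [n.cast_nonneg (α := ℝ)])).1
  have hnonneg (n k : ℕ) : 0 ≤ ordinaryHypergeometricCoefficient a b (c + n) k :=
    ordinaryHypergeometricCoefficient_nonneg ha.le hb.le (by positivity) k
  set T := ∑' k, ordinaryHypergeometricCoefficient a b c (k + 1)
  have hlower (n : ℕ) : 1 ≤ ∑' k, ordinaryHypergeometricCoefficient a b (c + n) k := by
    have := (hsumm n).le_tsum 0 fun k _ => hnonneg n k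
    rwa [ordinaryHypergeometricCoefficient_zero] at this
  have hupper (n : ℕ) :
      ∑' k, ordinaryHypergeometricCoefficient a b (c + n) k ≤ 1 + c / (c + n) * T := by
    rw [(hsumm n).tsum_eq_zero_add, ordinaryHypergeometricCoefficient_zero, ← tsum_mul_left]
    gcongr 1 + ?_
    have hsumm₀ : Summable (ordinaryHypergeometricCoefficient a b c) := by
      simpa using hsumm 0
    exact ((summable_nat_add_iff 1).2 (hsumm n)).tsum_le_tsum
      (fun k => ordinaryHypergeometricCoefficient_succ_le ha.le hb.le hc
        (le_add_of_nonneg_right n.cast_nonneg) k)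
      (((summable_nat_add_iff 1).2 hsumm₀).mul_left _)
  have hbound : Tendsto (fun n : ℕ => 1 + c / (c + n) * T) atTop (𝓝 1) := by
    simpa using ((tendsto_const_nhds.div_atTop
      (tendsto_atTop_add_const_left _ c tendsto_natCast_atTop_atTop)).mul_const T).const_add 1
  exact tendsto_of_tendsto_of_tendsto_of_le_of_le tendsto_const_nhds hbound hlower hupper

theorem hasSum_ordinaryHypergeometricCoefficient (ha : 0 < a) (hb : 0 < b) (habc : a + b < c) :
    HasSum (ordinaryHypergeometricCoefficient a b c)
      (Gamma c * Gamma (c - a - b) / (Gamma (c - a) * Gamma (c - b))) := by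
  have hlim := (tendsto_ascPochhammer_ratio (p := c - a) (q := c - b) (r := c) (s := c - a - b)
    (by ring) (Gamma_pos_of_pos (by linarith)).ne' (Gamma_pos_of_pos (by linarith)).ne').mul
      (tendsto_tsum_ordinaryHypergeometricCoefficient_add_nat ha hb habc)
  rw [mul_one] at hlim
  rw [tendsto_nhds_unique hlim (tendsto_const_nhds.congr
    (tsum_ordinaryHypergeometricCoefficient_eq_mul_tsum_add_nat ha hb habc))]
  exact (summable_and_tendsto_natCast_mul_ordinaryHypergeometricCoefficient ha hb habc).1.hasSum

end Hypergeometric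

/-- Closed form of the autocovariance series: For `0 < d₁, d₂ < 1/2`
and a natural lag `h`, with `ψ_j(d) = Γ(j+d)/(Γ(j+1)·Γ(d))`, the series
`∑_{j=0}^∞ ψ_j(d₁)·ψ_{j+h}(d₂)` converges to
`Γ(1-d₁-d₂)·Γ(d₂+h)/(Γ(d₂)·Γ(1-d₂)·Γ(1+h-d₁))`. -/
theorem autocovariance_closed_form (d₁ d₂ : ℝ)
    (hd₁0 : 0 < d₁) (hd₁ : d₁ < 1/2) (hd₂0 : 0 < d₂) (hd₂ : d₂ < 1/2) (h : ℕ) :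
    HasSum
      (fun j : ℕ =>
        (Real.Gamma (j + d₁) / (Real.Gamma (j + 1) * Real.Gamma d₁)) *
          (Real.Gamma ((j + h : ℕ) + d₂) / (Real.Gamma ((j + h : ℕ) + 1) * Real.Gamma d₂)))
      (Real.Gamma (1 - d₁ - d₂) * Real.Gamma (d₂ + h) /
        (Real.Gamma d₂ * Real.Gamma (1 - d₂) * Real.Gamma (1 + h - d₁))) := by
  have hGamma {x : ℝ} (hx : 0 < x) (n : ℕ) :
      Gamma (n + x) = (ascPochhammer ℝ n).eval x * Gamma x :=
    Gamma_nat_add (fun k => ((neg_nonpos.2 k.cast_nonneg).trans_lt hx).ne') n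
  have hb : 0 < (h : ℝ) + d₂ := by positivity
  have hc : 0 < (h : ℝ) + 1 := by positivity
  have hΓd₁ := (Gamma_pos_of_pos hd₁0).ne'
  have hΓd₂ := (Gamma_pos_of_pos hd₂0).ne'
  set K := Gamma (h + d₂) / (h ! * Gamma d₂) with hK
  have hgauss := (hasSum_ordinaryHypergeometricCoefficient hd₁0 hb
    (by linarith : d₁ + (h + d₂) < h + 1)).mul_left K
  have hvalue : K * (Gamma (h + 1) * Gamma (h + 1 - d₁ - (h + d₂)) /
      (Gamma (h + 1 - d₁) * Gamma (h + 1 - (h + d₂)))) =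
        Gamma (1 - d₁ - d₂) * Gamma (d₂ + h) / (Gamma d₂ * Gamma (1 - d₂) * Gamma (1 + h - d₁)) := by
    rw [hK, Gamma_nat_eq_factorial, show (h : ℝ) + 1 - d₁ - (h + d₂) = 1 - d₁ - d₂ by ring,
      show (h : ℝ) + 1 - d₁ = 1 + h - d₁ by ring, show (h : ℝ) + 1 - (h + d₂) = 1 - d₂ by ring,
      add_comm (h : ℝ) d₂]
    field_simp
  rw [hvalue] at hgauss
  refine hgauss.congr_fun fun j => ?_
  have := ascPochhammer_pos j ((h : ℝ) + 1) hc
  rw [show ((j + h : ℕ) : ℝ) + d₂ = j + (h + d₂) by push_cast; ring,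
    show ((j + h : ℕ) : ℝ) + 1 = j + (h + 1) by push_cast; ring,
    hGamma hd₁0, hGamma hb, hGamma hc, Gamma_nat_eq_factorial, Gamma_nat_eq_factorial, hK]
  field_simp
end

section
/- (Hyperbolic decay to zero) Let d₁, d₂ be real numbers with 0 < d₁ < 1/2 and 0 < d₂ < 1/2, and for natural h define γ(h) = Γ(1-d₁-d₂)·Γ(d₂+h) / (Γ(d₂)·Γ(1-d₂)·Γ(1+h-d₁)). Then γ(h) > 0 for every h, and γ(h) → 0 as h → ∞. -/
/-!
Put `c = 1 - d₁ - d₂ ∈ (0, 1)` and `x = d₂ + h`; then `γ h` is a positive constant times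
`Γ(x) / Γ(x + c)`. Log-convexity of `Γ` between `x + c` and `x + c + 1`, evaluated at `x + 1`,
gives `x Γ(x) ≤ Γ(x + c) (x + c)^(1 - c)`, so `Γ(x) / Γ(x + c) ≤ (x + c)^(1 - c) / x`,
which decays like `x^(-c)`.
-/

open Filter Real

namespace Real

theorem Gamma_div_Gamma_add_le {x c : ℝ} (hx : 0 < x) (hc₀ : 0 < c) (hc₁ : c < 1) :
    Gamma x / Gamma (x + c) ≤ (x + c) ^ (1 - c) / x := by
  have hxc : 0 < x + c := by linarith
  have hΓ : 0 < Gamma (x + c) := Gamma_pos_of_pos hxc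
  have hconv := Gamma_mul_add_mul_le_rpow_Gamma_mul_rpow_Gamma hxc (by linarith : 0 < x + c + 1)
    hc₀ (by linarith : 0 < 1 - c) (add_sub_cancel c 1)
  have hmid : c * (x + c) + (1 - c) * (x + c + 1) = x + 1 := by ring
  have hsplit : Gamma (x + c) ^ c * ((x + c) * Gamma (x + c)) ^ (1 - c)
      = Gamma (x + c) * (x + c) ^ (1 - c) := by
    rw [mul_rpow hxc.le hΓ.le, mul_comm ((x + c) ^ (1 - c)), ← mul_assoc, ← rpow_add hΓ,
      add_sub_cancel, rpow_one]
  rw [hmid, Gamma_add_one hx.ne', Gamma_add_one hxc.ne', hsplit] at hconv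
  rw [div_le_div_iff₀ hΓ hx]
  linarith

theorem tendsto_Gamma_div_Gamma_add_atTop {c : ℝ} (hc₀ : 0 < c) (hc₁ : c < 1) :
    Tendsto (fun x => Gamma x / Gamma (x + c)) atTop (nhds 0) := by
  have hpow : Tendsto (fun x => (x + c) ^ (-c)) atTop (nhds 0) :=
    (tendsto_rpow_neg_atTop hc₀).comp (tendsto_atTop_add_const_right _ c tendsto_id)
  have hratio : Tendsto (fun x : ℝ => 1 + c / x) atTop (nhds (1 + 0)) :=
    tendsto_const_nhds.add (tendsto_const_nhds.div_atTop tendsto_id)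
  have hbound : Tendsto (fun x => (x + c) ^ (1 - c) / x) atTop (nhds 0) := by
    rw [← zero_mul (1 + 0)]
    refine (hpow.mul hratio).congr' ?_
    filter_upwards [eventually_gt_atTop 0] with x hx
    rw [sub_eq_neg_add, rpow_add_one (by linarith), one_add_div hx.ne', mul_div_assoc]
  refine squeeze_zero' ?_ ?_ hbound
  · filter_upwards [eventually_gt_atTop 0] with x hx
    exact (div_pos (Gamma_pos_of_pos hx) (Gamma_pos_of_pos (by linarith))).le
  · filter_upwards [eventually_gt_atTop 0] with x hx
    exact Gamma_div_Gamma_add_le hx hc₀ hc₁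

end Real

/-- Hyperbolic decay to zero: For `0 < d₁, d₂ < 1/2`, the
autocovariance `γ(h) = Γ(1-d₁-d₂)·Γ(d₂+h)/(Γ(d₂)·Γ(1-d₂)·Γ(1+h-d₁))` is
positive for every `h` and tends to `0` as `h → ∞`. -/
theorem autocovariance_decay (d₁ d₂ : ℝ)
    (hd₁0 : 0 < d₁) (hd₁ : d₁ < 1/2) (hd₂0 : 0 < d₂) (hd₂ : d₂ < 1/2)
    (γ : ℕ → ℝ)
    (hγ : ∀ h : ℕ, γ h = Real.Gamma (1 - d₁ - d₂) * Real.Gamma (d₂ + h) /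
      (Real.Gamma d₂ * Real.Gamma (1 - d₂) * Real.Gamma (1 + h - d₁))) :
    (∀ h : ℕ, 0 < γ h) ∧ Tendsto γ atTop (nhds 0) := by
  set c := 1 - d₁ - d₂
  set K := Gamma c / (Gamma d₂ * Gamma (1 - d₂))
  have hK : 0 < K := div_pos (Gamma_pos_of_pos (by linarith))
    (mul_pos (Gamma_pos_of_pos hd₂0) (Gamma_pos_of_pos (by linarith)))
  have hγK : γ = fun h : ℕ => K * (Gamma (d₂ + h) / Gamma (d₂ + h + c)) := by
    ext h
    rw [hγ, show d₂ + h + c = 1 + h - d₁ by ring]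
    ring
  refine ⟨fun h => ?_, ?_⟩
  · rw [hγK]
    have hx : 0 < d₂ + h := by positivity
    exact mul_pos hK (div_pos (Gamma_pos_of_pos hx) (Gamma_pos_of_pos (by linarith)))
  · have hx : Tendsto (fun h : ℕ => d₂ + h) atTop atTop :=
      tendsto_atTop_add_const_left _ d₂ tendsto_natCast_atTop_atTop
    rw [hγK, ← mul_zero K]
    exact ((tendsto_Gamma_div_Gamma_add_atTop (by linarith) (by linarith)).comp hx).const_mul K
end

section
/- (Non-summability of the autocorrelations / long memory) Let d₁, d₂ be real numbers with 0 < d₁ < 1/2 and 0 < d₂ < 1/2, and for natural h define γ(h) = Γ(1-d₁-d₂)·Γ(d₂+h) / (Γ(d₂)·Γ(1-d₂)·Γ(1+h-d₁)). Then the function h ↦ |γ(h)| is NOT summable over the natural numbers; that is, ∑_{h=0}^∞ |γ(h)| = ∞. -/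
/-!
Up to the positive constant `Γ(1-d₁-d₂) / (Γ(d₂) Γ(1-d₂))`, `γ(h)` is `r(h) = Γ(a+h) / Γ(b+h)` with
`a = d₂`, `b = 1 - d₁`. The functional equation of `Γ` gives `r(h+1) (b+h) = r(h) (a+h)`, and since
`b - 1 ≤ a` the sequence `(h + b - 1) r(h)` is nondecreasing. Hence `r(h) ≥ C / (h + b - 1)` with
`C > 0`, and `∑ r(h)` dominates a shifted harmonic series.
-/

open Real Filter Asymptotics

theorem not_summable_of_mul_le_mul_succ {f : ℕ → ℝ} {c : ℝ} {N : ℕ} (hc : 0 < N + c)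
    (hf : 0 < f N) (hstep : ∀ n ≥ N, (n + c) * f n ≤ (n + 1 + c) * f (n + 1)) :
    ¬ Summable f := by
  set K := (N + c) * f N
  have hK : 0 < K := mul_pos hc hf
  have lower : ∀ n ≥ N, K ≤ (n + c) * f n := by
    intro n hn
    induction n, hn using Nat.le_induction with
    | base => rfl
    | succ n hn ih => exact ih.trans (by exact_mod_cast hstep n hn)
  have harmonic_isBigO : (fun n : ℕ => 1 / |n + c| ^ (1 : ℝ)) =O[atTop] f := by
    refine IsBigO.of_bound K⁻¹ ?_
    filter_upwards [eventually_ge_atTop N] with n hn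
    have hnc : 0 < n + c := by linarith [(Nat.cast_le (α := ℝ)).mpr hn]
    rw [rpow_one, abs_of_pos hnc, norm_div, norm_one, norm_of_nonneg hnc.le,
      norm_of_nonneg (by nlinarith [lower n hn]), div_le_iff₀ hnc]
    calc 1 = K⁻¹ * K := (inv_mul_cancel₀ hK.ne').symm
      _ ≤ K⁻¹ * ((n + c) * f n) := by gcongr; exact lower n hn
      _ = K⁻¹ * f n * (n + c) := by ring
  exact fun hsum => (summable_one_div_nat_add_rpow c 1).not.mpr (lt_irrefl 1)
    (summable_of_isBigO_nat hsum harmonic_isBigO)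

theorem Gamma_add_nat_succ_div_mul {a b : ℝ} (ha : 0 < a) (hb : 0 < b) (n : ℕ) :
    Gamma (a + (n + 1 : ℕ)) / Gamma (b + (n + 1 : ℕ)) * (b + n) =
      Gamma (a + n) / Gamma (b + n) * (a + n) := by
  have han : 0 < a + n := by positivity
  have hbn : 0 < b + n := by positivity
  rw [Nat.cast_succ, ← add_assoc, ← add_assoc, Gamma_add_one han.ne', Gamma_add_one hbn.ne']
  field_simp [(Gamma_pos_of_pos hbn).ne']

/-- With the weight `n + b - 1` the step inequality of `not_summable_of_mul_le_mul_succ` reduces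
to `b - 1 ≤ a`, for every `n`. -/
theorem not_summable_Gamma_add_div_Gamma_add {a b : ℝ} (ha : 0 < a) (hb : 0 < b)
    (hab : b ≤ a + 1) : ¬ Summable fun n : ℕ => Gamma (a + n) / Gamma (b + n) := by
  refine not_summable_of_mul_le_mul_succ (c := b - 1) (N := 1) (by simpa using hb)
    (by positivity) fun n _ => ?_
  have hratio : 0 ≤ Gamma (a + n) / Gamma (b + n) := by positivity
  calc (n + (b - 1)) * (Gamma (a + n) / Gamma (b + n))
      ≤ (a + n) * (Gamma (a + n) / Gamma (b + n)) :=
        mul_le_mul_of_nonneg_right (by linarith) hratio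
    _ = (n + 1 + (b - 1)) * (Gamma (a + (n + 1 : ℕ)) / Gamma (b + (n + 1 : ℕ))) := by
      rw [mul_comm, ← Gamma_add_nat_succ_div_mul ha hb]; ring

/-- Non-summability of the autocorrelations / long memory: For
`0 < d₁, d₂ < 1/2`, the autocovariance
`γ(h) = Γ(1-d₁-d₂)·Γ(d₂+h)/(Γ(d₂)·Γ(1-d₂)·Γ(1+h-d₁))` is not absolutely
summable: `∑_{h=0}^∞ |γ(h)| = ∞`. -/
theorem autocovariance_not_summable (d₁ d₂ : ℝ)
    (hd₁0 : 0 < d₁) (hd₁ : d₁ < 1/2) (hd₂0 : 0 < d₂) (hd₂ : d₂ < 1/2)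
    (γ : ℕ → ℝ)
    (hγ : ∀ h : ℕ, γ h = Real.Gamma (1 - d₁ - d₂) * Real.Gamma (d₂ + h) /
      (Real.Gamma d₂ * Real.Gamma (1 - d₂) * Real.Gamma (1 + h - d₁))) :
    ¬ Summable (fun h : ℕ => |γ h|) := by
  set K := Gamma (1 - d₁ - d₂) / (Gamma d₂ * Gamma (1 - d₂)) with hK_def
  have hK : 0 < K := div_pos (Gamma_pos_of_pos (by linarith))
    (mul_pos (Gamma_pos_of_pos hd₂0) (Gamma_pos_of_pos (by linarith)))
  have abs_γ_eq : ∀ h : ℕ, |γ h| = K * (Gamma (d₂ + h) / Gamma (1 - d₁ + h)) := by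
    intro h
    have hratio : 0 < Gamma (d₂ + h) / Gamma (1 - d₁ + h) :=
      div_pos (Gamma_pos_of_pos (by positivity))
        (Gamma_pos_of_pos (by linarith [(h.cast_nonneg : (0 : ℝ) ≤ h)]))
    rw [← abs_of_pos (mul_pos hK hratio), hγ h, show (1 : ℝ) + h - d₁ = 1 - d₁ + h by ring,
      hK_def, div_mul_div_comm]
  simp_rw [abs_γ_eq, summable_mul_left_iff hK.ne']
  exact not_summable_Gamma_add_div_Gamma_add hd₂0 (by linarith) (by linarith)
end
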